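/- arXiv:2008.12064 — 2 statements merged into one kernel-verified Lean document; each statement's English description precedes it below -/
import Mathlib

section
/- For unit vectors u, v, w in a complex Hilbert space, arccos|⟨u|w⟩| ≤ arccos|⟨u|v⟩| + arccos|⟨v|w⟩| (triangle inequality for the Fubini–Study angle). Equivalently, arccos|⟨φ|ψ̃⟩| ≥ arccos|⟨φ|ψ⟩| − arccos|⟨ψ|ψ̃⟩|. -/
/-!
Decompose `u` and `w` along the unit vector `v`: with `u' = u - ⟪v, u⟫ v` and `w' = w - ⟪v, w⟫ v`
orthogonal to `v`, one has `⟪u, w⟫ = ⟪u, v⟫⟪v, w⟫ + ⟪u', w'⟫`, and `‖u'‖ = sin α`, `‖w'‖ = sin β`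
for `α = arccos |⟪u, v⟫|`, `β = arccos |⟪v, w⟫|`. Cauchy–Schwarz on `⟪u', w'⟫` then gives
`|⟪u, w⟫| ≥ cos α cos β - sin α sin β = cos (α + β)`, and `arccos` is antitone.
-/

open Real

open scoped InnerProductSpace

section Decomposition

variable {𝕜 E : Type*} [RCLike 𝕜] [NormedAddCommGroup E] [InnerProductSpace 𝕜 E]
  {v : E}

lemma inner_sub_inner_smul_self_eq_zero (hv : ‖v‖ = 1) (u : E) :
    ⟪v, u - ⟪v, u⟫_𝕜 • v⟫_𝕜 = 0 := by
  simp [inner_sub_right, inner_smul_right, inner_self_eq_norm_sq_to_K, hv]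

lemma norm_sub_inner_smul_sq (hv : ‖v‖ = 1) (u : E) :
    ‖u - ⟪v, u⟫_𝕜 • v‖ ^ 2 = ‖u‖ ^ 2 - ‖⟪v, u⟫_𝕜‖ ^ 2 := by
  have horth : ⟪⟪v, u⟫_𝕜 • v, u - ⟪v, u⟫_𝕜 • v⟫_𝕜 = 0 := by
    rw [inner_smul_left, inner_sub_inner_smul_self_eq_zero hv, mul_zero]
  have hpyth := norm_add_sq_eq_norm_sq_add_norm_sq_of_inner_eq_zero _ _ horth
  rw [add_sub_cancel, norm_smul, hv, mul_one] at hpyth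
  linarith

lemma inner_eq_inner_mul_inner_add_inner_sub (hv : ‖v‖ = 1) (u w : E) :
    ⟪u, w⟫_𝕜 = ⟪u, v⟫_𝕜 * ⟪v, w⟫_𝕜 + ⟪u - ⟪v, u⟫_𝕜 • v, w - ⟪v, w⟫_𝕜 • v⟫_𝕜 := by
  have hperp : ⟪u - ⟪v, u⟫_𝕜 • v, v⟫_𝕜 = 0 := by
    rw [← inner_conj_symm, inner_sub_inner_smul_self_eq_zero hv, map_zero]
  rw [inner_sub_right, inner_smul_right, hperp, mul_zero, sub_zero, inner_sub_left,
    inner_smul_left, inner_conj_symm]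
  ring

lemma norm_inner_mul_norm_inner_sub_le (hv : ‖v‖ = 1) (u w : E) :
    ‖⟪u, v⟫_𝕜‖ * ‖⟪v, w⟫_𝕜‖ - √(‖u‖ ^ 2 - ‖⟪u, v⟫_𝕜‖ ^ 2) * √(‖w‖ ^ 2 - ‖⟪v, w⟫_𝕜‖ ^ 2)
      ≤ ‖⟪u, w⟫_𝕜‖ := by
  have hnorm (x : E) : ‖x - ⟪v, x⟫_𝕜 • v‖ = √(‖x‖ ^ 2 - ‖⟪v, x⟫_𝕜‖ ^ 2) := by
    rw [← norm_sub_inner_smul_sq hv, sqrt_sq (norm_nonneg _)]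
  have hcs := norm_inner_le_norm (𝕜 := 𝕜) (u - ⟪v, u⟫_𝕜 • v) (w - ⟪v, w⟫_𝕜 • v)
  rw [hnorm, hnorm, norm_inner_symm v u] at hcs
  have htri := norm_sub_le (⟪u, w⟫_𝕜) ⟪u - ⟪v, u⟫_𝕜 • v, w - ⟪v, w⟫_𝕜 • v⟫_𝕜
  rw [inner_eq_inner_mul_inner_add_inner_sub hv u w, add_sub_cancel_right, norm_mul,
    ← inner_eq_inner_mul_inner_add_inner_sub hv u w] at htri
  linarith

end Decomposition

lemma Real.arccos_le_arccos_add_arccos {a b c : ℝ} (ha₁ : -1 ≤ a) (ha₂ : a ≤ 1)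
    (hb₁ : -1 ≤ b) (hb₂ : b ≤ 1) (h : a * b - √(1 - a ^ 2) * √(1 - b ^ 2) ≤ c) :
    arccos c ≤ arccos a + arccos b := by
  rcases le_or_gt (arccos a + arccos b) π with hπ | hπ
  · have hcos : cos (arccos a + arccos b) = a * b - √(1 - a ^ 2) * √(1 - b ^ 2) := by
      rw [cos_add, cos_arccos ha₁ ha₂, cos_arccos hb₁ hb₂, sin_arccos, sin_arccos]
    calc arccos c ≤ arccos (cos (arccos a + arccos b)) := antitone_arccos (hcos ▸ h)
      _ = arccos a + arccos b :=
        arccos_cos (add_nonneg (arccos_nonneg a) (arccos_nonneg b)) hπ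
  · exact (arccos_le_pi c).trans hπ.le

theorem stmt_3 {H : Type*} [NormedAddCommGroup H] [InnerProductSpace ℂ H]
    (u v w : H) (hu : ‖u‖ = 1) (hv : ‖v‖ = 1) (hw : ‖w‖ = 1) :
    Real.arccos ‖(inner ℂ u w : ℂ)‖ ≤
      Real.arccos ‖(inner ℂ u v : ℂ)‖ + Real.arccos ‖(inner ℂ v w : ℂ)‖ := by
  have hle_one {x y : H} (hx : ‖x‖ = 1) (hy : ‖y‖ = 1) : ‖⟪x, y⟫_ℂ‖ ≤ 1 := by
    simpa [hx, hy] using norm_inner_le_norm (𝕜 := ℂ) x y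
  have hkey := norm_inner_mul_norm_inner_sub_le (𝕜 := ℂ) hv u w
  rw [hu, hw, one_pow] at hkey
  exact arccos_le_arccos_add_arccos (by linarith [norm_nonneg ⟪u, v⟫_ℂ]) (hle_one hu hv)
    (by linarith [norm_nonneg ⟪v, w⟫_ℂ]) (hle_one hv hw) hkey
end

section
/- Let 0 < a₁ ≤ 1 and 0 ≤ F̂ with F̂ ≤ a₁. Define for c ∈ [F̂/√a₁, √a₁] the function L(c) = ((a₁ − c²)/(1 − c²)) · (1 − ((F̂/√a₁)·c + √(1 − F̂²/a₁)·√(1 − c²))²) (with L(c) = 0 when c² = 1). If a₁ = 1, then the supremum of L over this interval is at least 1 − F̂². (In fact, taking c = 1, i.e. c = √a₁, gives L = 1 − F̂² in a suitable limiting sense; more concretely, for a₁ = 1 and any c ∈ [F̂, 1), L(c) = 1 − (F̂c + √(1−F̂²)√(1−c²))², whose supremum as c → 1 equals 1 − F̂².) -/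
/-! For `a₁ = 1` the prefactor `(1 - c²)/(1 - c²)` is `1` on `[F̂, 1)`, and the remaining factor is
continuous and equals `1 - F̂²` at `c = 1`. Since `1` is a limit point of `[F̂, 1)` when `F̂ < 1`,
the supremum is at least this limit; when `F̂ ≥ 1` the interval is empty and `sSup ∅ = 0 ≥ 1 - F̂²`. -/

open Filter Topology Set

theorem le_csSup_image_of_tendsto {α β : Type*} [TopologicalSpace α]
    [ConditionallyCompleteLattice β] [TopologicalSpace β] [ClosedIicTopology β]
    {f : α → β} {s : Set α} {a : α} {l : β} [(𝓝[s] a).NeBot]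
    (hf : BddAbove (f '' s)) (h : Tendsto f (𝓝[s] a) (𝓝 l)) : l ≤ sSup (f '' s) :=
  le_of_tendsto h (eventually_nhdsWithin_of_forall fun _ hx => le_csSup hf (mem_image_of_mem f hx))

theorem div_self_mul_le_one {K : Type*} [Field K] [LinearOrder K] [IsStrictOrderedRing K]
    (x : K) {y : K} (hy : y ≤ 1) : x / x * y ≤ 1 := by
  rcases eq_or_ne x 0 with rfl | hx
  · simp
  · rwa [div_self hx, one_mul]

theorem tendsto_div_self_nhdsLT_one :
    Tendsto (fun c : ℝ => (1 - c ^ 2) / (1 - c ^ 2)) (𝓝[<] 1) (𝓝 1) := by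
  refine tendsto_const_nhds.congr' ?_
  filter_upwards [Ioo_mem_nhdsLT zero_lt_one] with c ⟨hc0, hc1⟩
  have : 1 - c ^ 2 ≠ 0 := by nlinarith
  exact (div_self this).symm

theorem tendsto_one_sub_overlap_sq_nhdsLT_one (F : ℝ) :
    Tendsto (fun c : ℝ => (1 - c ^ 2) / (1 - c ^ 2) *
        (1 - (F * c + √(1 - F ^ 2) * √(1 - c ^ 2)) ^ 2)) (𝓝[<] 1) (𝓝 (1 - F ^ 2)) := by
  have hcont : Tendsto (fun c : ℝ => 1 - (F * c + √(1 - F ^ 2) * √(1 - c ^ 2)) ^ 2)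
      (𝓝 1) (𝓝 (1 - F ^ 2)) :=
    (by fun_prop : Continuous fun c : ℝ => 1 - (F * c + √(1 - F ^ 2) * √(1 - c ^ 2)) ^ 2)
      |>.tendsto' 1 _ (by simp)
  simpa using tendsto_div_self_nhdsLT_one.mul (hcont.mono_left nhdsWithin_le_nhds)

theorem stmt_5_general (a₁ F : ℝ) (ha : a₁ = 1) :
    1 - F ^ 2 ≤ sSup ((fun c : ℝ =>
        ((a₁ - c ^ 2) / (1 - c ^ 2)) *
          (1 - (F / Real.sqrt a₁ * c
            + Real.sqrt (1 - F ^ 2 / a₁) * Real.sqrt (1 - c ^ 2)) ^ 2)) ''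
      Set.Ico (F / Real.sqrt a₁) (Real.sqrt a₁)) := by
  subst ha
  simp only [Real.sqrt_one, div_one]
  rcases le_or_gt 1 F with hF1 | hF1
  · rw [Ico_eq_empty_of_le hF1, image_empty, Real.sSup_empty]
    nlinarith
  · have : (𝓝[Ico F 1] (1 : ℝ)).NeBot := by
      rw [← mem_closure_iff_nhdsWithin_neBot, closure_Ico hF1.ne]
      exact right_mem_Icc.2 hF1.le
    refine le_csSup_image_of_tendsto ⟨1, ?_⟩
      ((tendsto_one_sub_overlap_sq_nhdsLT_one F).mono_left (nhdsWithin_mono _ Ico_subset_Iio_self))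
    rintro _ ⟨c, -, rfl⟩
    exact div_self_mul_le_one _ (sub_le_self _ (sq_nonneg _))

theorem stmt_5 (a₁ F : ℝ) (ha : a₁ = 1) (hF0 : 0 ≤ F) (hFa : F ≤ a₁) :
    1 - F ^ 2 ≤ sSup ((fun c : ℝ =>
        ((a₁ - c ^ 2) / (1 - c ^ 2)) *
          (1 - (F / Real.sqrt a₁ * c
            + Real.sqrt (1 - F ^ 2 / a₁) * Real.sqrt (1 - c ^ 2)) ^ 2)) ''
      Set.Ico (F / Real.sqrt a₁) (Real.sqrt a₁)) :=
  stmt_5_general a₁ F ha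
end
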